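/- Let f : T(V) → V be linear with f(1) = 0. There exists a unique coalgebra endomorphism ψ of (T(V), Δ) (with Δ the deconcatenation coproduct) such that π ∘ ψ = f, where π is the projection onto V; moreover ψ is the unique linear endomorphism satisfying ψ = ε + f ≺ ψ, where ε is the augmentation and f ≺ ψ is defined via the reduced coproduct and Hoffman's ≺ product. -/

import Mathlib

open Finsupp TensorProduct

noncomputable section

variable (k : Type) [Field k] (V : Type)

/-- The free `k`-module on the set of words with letters in `V`
(a model of the tensor module `T(V)`; pure tensors of elements of `V`
correspond to the basis vectors indexed by lists). -/
abbrev TW := List V →₀ k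

variable {k V} in
/-- The basis vector of a word. -/
def sg (w : List V) : TW k V := Finsupp.single w 1

/-- Linear extension of a word-indexed family. -/
def ext1 (f : List V → TW k V) : TW k V →ₗ[k] TW k V :=
  Finsupp.lsum k fun w => LinearMap.toSpanSingleton k _ (f w)

/-- Bilinear extension of a map defined on pairs of words. -/
def ext2 (f : List V → List V → TW k V) : TW k V →ₗ[k] TW k V →ₗ[k] TW k V :=
  Finsupp.lsum k fun v => LinearMap.toSpanSingleton k _
    (Finsupp.lsum k fun w => LinearMap.toSpanSingleton k (TW k V) (f v w))

variable (mul : V → V → V)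

/-- Hoffman's quasi-shuffle product `⧢` on words:
`1 ⧢ w = w = w ⧢ 1` and `av ⧢ bw = a(v ⧢ bw) + b(av ⧢ w) + (a·b)(v ⧢ w)`. -/
def qshW : List V → List V → TW k V
  | [], w => sg w
  | a::v, [] => sg (a::v)
  | a::v, b::w =>
      (qshW v (b::w)).mapDomain (List.cons a) +
      (qshW (a::v) w).mapDomain (List.cons b) +
      (qshW v w).mapDomain (List.cons (mul a b))
  termination_by v w => v.length + w.length

/-- Hoffman's half-product `av ≺ bw = a(v ⧢ bw)`, with `x ≺ 1 = x`, `1 ≺ x = 0`. -/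
def precW : List V → List V → TW k V
  | [], _ => 0
  | a::v, w => (qshW k V mul v w).mapDomain (List.cons a)

/-- Hoffman's half-product `av ≻ bw = b(av ⧢ w)`, with `1 ≻ x = x`, `x ≻ 1 = 0`. -/
def succW : List V → List V → TW k V
  | _, [] => 0
  | v, b::w => (qshW k V mul v w).mapDomain (List.cons b)

/-- Hoffman's product `av • bw = (a·b)(v ⧢ w)`. -/
def bulW : List V → List V → TW k V
  | [], _ => 0
  | _::_, [] => 0
  | a::v, b::w => (qshW k V mul v w).mapDomain (List.cons (mul a b))

def qshL : TW k V →ₗ[k] TW k V →ₗ[k] TW k V := ext2 k V (qshW k V mul)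
def precL : TW k V →ₗ[k] TW k V →ₗ[k] TW k V := ext2 k V (precW k V mul)
def succL : TW k V →ₗ[k] TW k V →ₗ[k] TW k V := ext2 k V (succW k V mul)
def bulL : TW k V →ₗ[k] TW k V →ₗ[k] TW k V := ext2 k V (bulW k V mul)

/-- Deconcatenation coproduct on a word. -/
def delW (w : List V) : TW k V ⊗[k] TW k V :=
  ∑ i ∈ Finset.range (w.length + 1), sg (w.take i) ⊗ₜ[k] sg (w.drop i)

/-- The deconcatenation coproduct, linearly extended. -/
def delL : TW k V →ₗ[k] TW k V ⊗[k] TW k V :=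
  Finsupp.lsum k fun w => LinearMap.toSpanSingleton k _ (delW k V w)

/-- Reduced deconcatenation coproduct on a word. -/
def rdelW (w : List V) : TW k V ⊗[k] TW k V :=
  ∑ i ∈ Finset.Ioo 0 w.length, sg (w.take i) ⊗ₜ[k] sg (w.drop i)

/-- The reduced deconcatenation coproduct, linearly extended. -/
def rdelL : TW k V →ₗ[k] TW k V ⊗[k] TW k V :=
  Finsupp.lsum k fun w => LinearMap.toSpanSingleton k _ (rdelW k V w)

/-- The augmentation ideal `T⁺(V)`: the span of the nonempty words. -/
def Tplus : Submodule k (TW k V) :=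
  Submodule.span k {x | ∃ w : List V, w ≠ [] ∧ x = sg w}

variable [NonUnitalCommRing V] [Module k V]

/-- The multilinearity relations: quotienting the free module on words by them
yields the genuine tensor algebra `T(V)`. -/
def rel : Submodule k (TW k V) :=
  Submodule.span k
    ({x | ∃ (u w : List V) (a b : V),
        x = sg (u ++ (a + b) :: w) - sg (u ++ a :: w) - sg (u ++ b :: w)} ∪
     {x | ∃ (u w : List V) (c : k) (a : V),
        x = sg (u ++ (c • a) :: w) - c • sg (u ++ a :: w)})

/-- The (honest) tensor coalgebra/quasi-shuffle bialgebra `T(V)`. -/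
abbrev QT := TW k V ⧸ rel k V

/-- Projection onto words of length 1, on the word model. -/
def piW (w : List V) : TW k V := if w.length = 1 then sg w else 0

def piL : TW k V →ₗ[k] TW k V := ext1 k V (piW k V)

/-- The augmentation, on the word model. -/
def epsL : TW k V →ₗ[k] k :=
  Finsupp.lsum k fun w => match w with
    | [] => LinearMap.id
    | _ :: _ => 0

set_option linter.unusedSectionVars false
set_option linter.unreachableTactic false
set_option linter.unnecessarySeqFocus false
set_option linter.unusedTactic false

section Aux

variable {k V}

lemma ext1_sg (f : List V → TW k V) (w : List V) : ext1 k V f (sg w) = f w := by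
  simp [ext1, sg, Finsupp.lsum_single, LinearMap.toSpanSingleton_apply]

lemma ext2_sg (f : List V → List V → TW k V) (u v : List V) :
    ext2 k V f (sg u) (sg v) = f u v := by
  simp [ext2, sg, Finsupp.lsum_single, LinearMap.toSpanSingleton_apply]

lemma delL_sg (w : List V) : delL k V (sg w) = delW k V w := by
  simp [delL, sg, Finsupp.lsum_single, LinearMap.toSpanSingleton_apply]

lemma epsL_nil : epsL k V (sg ([] : List V)) = 1 := by
  simp [epsL, sg, Finsupp.lsum_single]

lemma epsL_cons (a : V) (v : List V) : epsL k V (sg (a :: v)) = 0 := by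
  simp [epsL, sg, Finsupp.lsum_single]

lemma piL_sg (w : List V) : piL k V (sg w) = piW k V w := ext1_sg _ _

lemma precW_single (m : V → V → V) (a : V) (v : List V) :
    precW k V m [a] v = sg (a :: v) := by
  simp [precW, qshW, Finsupp.mapDomain_single, sg]

lemma triangle_sum {M : Type*} [AddCommMonoid M] (n : ℕ) (T : ℕ → ℕ → M) :
    ∑ i ∈ Finset.range (n+1), ∑ j ∈ Finset.range (n - i + 1), T i j
    = ∑ m ∈ Finset.range (n+1), ∑ i ∈ Finset.range (m+1), T i (m - i) := by
  rw [Finset.sum_sigma', Finset.sum_sigma']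
  refine Finset.sum_nbij' (fun p => ⟨p.1 + p.2, p.1⟩) (fun p => ⟨p.2, p.1 - p.2⟩)
    ?_ ?_ ?_ ?_ ?_ <;>
  · rintro ⟨x, y⟩ h
    simp only [Finset.mem_sigma, Finset.mem_range] at *
    first
    | omega
    | (simp only [Sigma.mk.injEq, heq_eq_eq]; constructor <;> omega)
    | (congr 1 <;> omega)

end Aux
section Aux2
set_option linter.unusedSectionVars false

variable {k V} [NonUnitalCommRing V] [Module k V]

lemma mk_rel_add (u w : List V) (a b : V) :
    (rel k V).mkQ (sg (u ++ (a + b) :: w))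
      = (rel k V).mkQ (sg (u ++ a :: w)) + (rel k V).mkQ (sg (u ++ b :: w)) := by
  have h : sg (u ++ (a + b) :: w) - sg (u ++ a :: w) - sg (u ++ b :: w) ∈ rel k V :=
    Submodule.subset_span (Or.inl ⟨u, w, a, b, rfl⟩)
  have h2 : (rel k V).mkQ (sg (u ++ (a + b) :: w) - sg (u ++ a :: w) - sg (u ++ b :: w)) = 0 :=
    (Submodule.Quotient.mk_eq_zero _).2 h
  rw [map_sub, map_sub, sub_sub, sub_eq_zero] at h2
  exact h2

lemma mk_rel_smul (u w : List V) (c : k) (a : V) :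
    (rel k V).mkQ (sg (u ++ (c • a) :: w)) = c • (rel k V).mkQ (sg (u ++ a :: w)) := by
  have h : sg (u ++ (c • a) :: w) - c • sg (u ++ a :: w) ∈ rel k V :=
    Submodule.subset_span (Or.inr ⟨u, w, c, a, rfl⟩)
  have h2 : (rel k V).mkQ (sg (u ++ (c • a) :: w) - c • sg (u ++ a :: w)) = 0 :=
    (Submodule.Quotient.mk_eq_zero _).2 h
  rw [map_sub, map_smul, sub_eq_zero] at h2
  exact h2

/-- Extensionality on the quotient via word basis vectors. -/
lemma QT_ext {M : Type} [AddCommGroup M] [Module k M] {F G : QT k V →ₗ[k] M}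
    (h : ∀ w : List V, F ((rel k V).mkQ (sg w)) = G ((rel k V).mkQ (sg w))) : F = G := by
  refine Submodule.linearMap_qext _ (Finsupp.lhom_ext fun w c => ?_)
  have : (Finsupp.single w c : TW k V) = c • sg w := by simp [sg, Finsupp.smul_single]
  simp only [LinearMap.comp_apply, this, map_smul, h]

/-- The recursion defining `ψ` on words, parametrized by a family of operators. -/
def psiW (A : List V → QT k V →ₗ[k] QT k V) : List V → QT k V
  | [] => (rel k V).mkQ (sg [])
  | a :: v => ∑ i ∈ Finset.range (v.length + 1),
      A (a :: v.take i) (psiW A (v.drop i))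
  termination_by w => w.length
  decreasing_by simp [List.length_drop]

lemma psiW_nil (A : List V → QT k V →ₗ[k] QT k V) :
    psiW A [] = (rel k V).mkQ (sg []) := by simp [psiW]

lemma psiW_cons (A : List V → QT k V →ₗ[k] QT k V) (a : V) (v : List V) :
    psiW A (a :: v) = ∑ i ∈ Finset.range (v.length + 1),
      A (a :: v.take i) (psiW A (v.drop i)) := by
  rw [psiW]

end Aux2
section Aux3
set_option linter.unusedSectionVars false

variable {k V} [NonUnitalCommRing V] [Module k V]

lemma psiW_rel_add (A : List V → QT k V →ₗ[k] QT k V)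
    (hA1 : ∀ (u w : List V) (a b : V), A (u ++ (a + b) :: w) = A (u ++ a :: w) + A (u ++ b :: w)) :
    ∀ (u w : List V) (a b : V),
      psiW A (u ++ (a + b) :: w) = psiW A (u ++ a :: w) + psiW A (u ++ b :: w) := by
  suffices H : ∀ (n : ℕ) (u : List V), u.length ≤ n → ∀ (w : List V) (a b : V),
      psiW A (u ++ (a + b) :: w) = psiW A (u ++ a :: w) + psiW A (u ++ b :: w) by
    exact fun u w a b => H u.length u le_rfl w a b
  intro n
  induction n with
  | zero =>
    intro u hu w a b
    rw [List.length_eq_zero_iff.1 (Nat.le_zero.1 hu)]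
    simp only [List.nil_append, psiW_cons, ← Finset.sum_add_distrib]
    refine Finset.sum_congr rfl fun i _ => ?_
    rw [show ∀ x : V, x :: w.take i = [] ++ x :: w.take i from fun _ => rfl, hA1]
    simp
  | succ n ih =>
    intro u hu w a b
    match u with
    | [] =>
      simp only [List.nil_append, psiW_cons, ← Finset.sum_add_distrib]
      refine Finset.sum_congr rfl fun i _ => ?_
      rw [show ∀ x : V, x :: w.take i = [] ++ x :: w.take i from fun _ => rfl, hA1]
      simp
    | c :: u' =>
      simp only [List.length_cons] at hu
      simp only [List.cons_append, psiW_cons, List.length_append, List.length_cons,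
        ← Finset.sum_add_distrib]
      refine Finset.sum_congr rfl fun i hi => ?_
      simp only [Finset.mem_range] at hi
      by_cases hle : i ≤ u'.length
      · have ht : ∀ x : V, (u' ++ x :: w).take i = u'.take i :=
          fun x => List.take_append_of_le_length hle
        have hd : ∀ x : V, (u' ++ x :: w).drop i = u'.drop i ++ x :: w :=
          fun x => List.drop_append_of_le_length hle
        rw [ht, ht, ht, hd, hd, hd, ih (u'.drop i) (by simp; omega)]
        simp
      · obtain ⟨j, rfl⟩ : ∃ j, i = u'.length + (j + 1) := ⟨i - u'.length - 1, by omega⟩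
        have ht : ∀ x : V, (u' ++ x :: w).take (u'.length + (j + 1)) = u' ++ x :: w.take j :=
          fun x => by rw [List.take_append, List.take_of_length_le (by omega), Nat.add_sub_cancel_left]; rfl
        have hd : ∀ x : V, (u' ++ x :: w).drop (u'.length + (j + 1)) = w.drop j :=
          fun x => by rw [List.drop_append, List.drop_of_length_le (by omega), Nat.add_sub_cancel_left]; rfl
        rw [ht, ht, ht, hd a, hd b, hd (a + b)]
        rw [show ∀ x : V, c :: (u' ++ x :: w.take j) = (c :: u') ++ x :: w.take j
          from fun _ => rfl, hA1]
        simp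

lemma psiW_rel_smul (A : List V → QT k V →ₗ[k] QT k V)
    (hA2 : ∀ (u w : List V) (c : k) (a : V), A (u ++ (c • a) :: w) = c • A (u ++ a :: w)) :
    ∀ (u w : List V) (c : k) (a : V),
      psiW A (u ++ (c • a) :: w) = c • psiW A (u ++ a :: w) := by
  suffices H : ∀ (n : ℕ) (u : List V), u.length ≤ n → ∀ (w : List V) (c : k) (a : V),
      psiW A (u ++ (c • a) :: w) = c • psiW A (u ++ a :: w) by
    exact fun u w c a => H u.length u le_rfl w c a
  intro n
  induction n with
  | zero =>
    intro u hu w c a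
    rw [List.length_eq_zero_iff.1 (Nat.le_zero.1 hu)]
    simp only [List.nil_append, psiW_cons, Finset.smul_sum]
    refine Finset.sum_congr rfl fun i _ => ?_
    rw [show ∀ x : V, x :: w.take i = [] ++ x :: w.take i from fun _ => rfl, hA2]
    simp
  | succ n ih =>
    intro u hu w c a
    match u with
    | [] =>
      simp only [List.nil_append, psiW_cons, Finset.smul_sum]
      refine Finset.sum_congr rfl fun i _ => ?_
      rw [show ∀ x : V, x :: w.take i = [] ++ x :: w.take i from fun _ => rfl, hA2]
      simp
    | d :: u' =>
      simp only [List.length_cons] at hu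
      simp only [List.cons_append, psiW_cons, List.length_append, List.length_cons,
        Finset.smul_sum]
      refine Finset.sum_congr rfl fun i hi => ?_
      simp only [Finset.mem_range] at hi
      by_cases hle : i ≤ u'.length
      · have ht : ∀ x : V, (u' ++ x :: w).take i = u'.take i :=
          fun x => List.take_append_of_le_length hle
        have hd : ∀ x : V, (u' ++ x :: w).drop i = u'.drop i ++ x :: w :=
          fun x => List.drop_append_of_le_length hle
        rw [ht, ht, hd, hd, ih (u'.drop i) (by simp; omega)]
        simp
      · obtain ⟨j, rfl⟩ : ∃ j, i = u'.length + (j + 1) := ⟨i - u'.length - 1, by omega⟩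
        have ht : ∀ x : V, (u' ++ x :: w).take (u'.length + (j + 1)) = u' ++ x :: w.take j :=
          fun x => by rw [List.take_append, List.take_of_length_le (by omega), Nat.add_sub_cancel_left]; rfl
        have hd : ∀ x : V, (u' ++ x :: w).drop (u'.length + (j + 1)) = w.drop j :=
          fun x => by rw [List.drop_append, List.drop_of_length_le (by omega), Nat.add_sub_cancel_left]; rfl
        rw [ht, ht, hd a, hd (c • a)]
        rw [show ∀ x : V, d :: (u' ++ x :: w.take j) = (d :: u') ++ x :: w.take j
          from fun _ => rfl, hA2]
        simp

end Aux3
section Aux4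
set_option linter.unusedSectionVars false

variable {k V} [NonUnitalCommRing V] [Module k V]
variable (ι : V →ₗ[k] QT k V) (pQ : QT k V →ₗ[k] QT k V →ₗ[k] QT k V)
  (f : QT k V →ₗ[k] V)

/-- The operator family `A u = pQ (ι (f u))`. -/
def Aop : List V → QT k V →ₗ[k] QT k V :=
  fun u => pQ (ι (f ((rel k V).mkQ (sg u))))

lemma Aop_rel_add (u w : List V) (a b : V) :
    Aop ι pQ f (u ++ (a + b) :: w) = Aop ι pQ f (u ++ a :: w) + Aop ι pQ f (u ++ b :: w) := by
  simp only [Aop, mk_rel_add u w a b, map_add]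

lemma Aop_rel_smul (u w : List V) (c : k) (a : V) :
    Aop ι pQ f (u ++ (c • a) :: w) = c • Aop ι pQ f (u ++ a :: w) := by
  simp only [Aop, mk_rel_smul u w c a, map_smul]

/-- The linear extension of `psiW` to the word model. -/
def PsiW : TW k V →ₗ[k] QT k V :=
  Finsupp.lsum k fun w => LinearMap.toSpanSingleton k _ (psiW (Aop ι pQ f) w)

lemma PsiW_sg (w : List V) : PsiW ι pQ f (sg w) = psiW (Aop ι pQ f) w := by
  simp [PsiW, sg, Finsupp.lsum_single, LinearMap.toSpanSingleton_apply]

lemma PsiW_ker : rel k V ≤ LinearMap.ker (PsiW ι pQ f) := by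
  refine Submodule.span_le.2 ?_
  rintro x (⟨u, w, a, b, rfl⟩ | ⟨u, w, c, a, rfl⟩) <;>
    simp only [SetLike.mem_coe, LinearMap.mem_ker, map_sub, map_smul, PsiW_sg]
  · rw [psiW_rel_add _ (Aop_rel_add ι pQ f)]; abel
  · rw [psiW_rel_smul _ (Aop_rel_smul ι pQ f)]; abel

/-- The coalgebra endomorphism `ψ`, descended to the quotient. -/
def psiQ : QT k V →ₗ[k] QT k V :=
  (rel k V).liftQ (PsiW ι pQ f) (PsiW_ker ι pQ f)

lemma psiQ_mk (x : TW k V) : psiQ ι pQ f ((rel k V).mkQ x) = PsiW ι pQ f x := rfl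

lemma psiQ_nil : psiQ ι pQ f ((rel k V).mkQ (sg [])) = (rel k V).mkQ (sg []) := by
  rw [psiQ_mk, PsiW_sg, psiW_nil]

lemma psiQ_cons (a : V) (v : List V) :
    psiQ ι pQ f ((rel k V).mkQ (sg (a :: v)))
      = ∑ i ∈ Finset.range (v.length + 1),
          pQ (ι (f ((rel k V).mkQ (sg (a :: v.take i)))))
            (psiQ ι pQ f ((rel k V).mkQ (sg (v.drop i)))) := by
  rw [psiQ_mk, PsiW_sg, psiW_cons]
  refine Finset.sum_congr rfl fun i _ => ?_
  rw [psiQ_mk, PsiW_sg]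
  rfl

end Aux4
section Aux5
set_option linter.unusedSectionVars false

variable {k V} [NonUnitalCommRing V] [Module k V]
variable (ΔQ : QT k V →ₗ[k] QT k V ⊗[k] QT k V)
    (εQ : QT k V →ₗ[k] k)
    (πQ : QT k V →ₗ[k] QT k V)
    (ι : V →ₗ[k] QT k V)
    (pQ : QT k V →ₗ[k] QT k V →ₗ[k] QT k V)
    (hΔQ : ΔQ ∘ₗ (rel k V).mkQ
      = TensorProduct.map (rel k V).mkQ (rel k V).mkQ ∘ₗ delL k V)
    (hεQ : εQ ∘ₗ (rel k V).mkQ = epsL k V)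
    (hπQ : πQ ∘ₗ (rel k V).mkQ = (rel k V).mkQ ∘ₗ piL k V)
    (hι : ∀ v : V, ι v = (rel k V).mkQ (sg [v]))
    (hpQ : ∀ x y : TW k V,
      pQ ((rel k V).mkQ x) ((rel k V).mkQ y) = (rel k V).mkQ (precL k V (· * ·) x y))
    (f : QT k V →ₗ[k] V)
    (hf : f ((rel k V).mkQ (sg ([] : List V))) = 0)

include hΔQ in
lemma DQ_sg (w : List V) : ΔQ ((rel k V).mkQ (sg w))
    = ∑ i ∈ Finset.range (w.length + 1),
        (rel k V).mkQ (sg (w.take i)) ⊗ₜ[k] (rel k V).mkQ (sg (w.drop i)) := by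
  have h := LinearMap.congr_fun hΔQ (sg w)
  simp only [LinearMap.comp_apply] at h
  rw [h, delL_sg, delW, map_sum]
  simp [TensorProduct.map_tmul]

include hεQ in
lemma eQ_sg_nil : εQ ((rel k V).mkQ (sg ([] : List V))) = 1 := by
  have h := LinearMap.congr_fun hεQ (sg ([] : List V))
  simp only [LinearMap.comp_apply] at h
  rw [h, epsL_nil]

include hεQ in
lemma eQ_sg_cons (a : V) (v : List V) : εQ ((rel k V).mkQ (sg (a :: v))) = 0 := by
  have h := LinearMap.congr_fun hεQ (sg (a :: v))
  simp only [LinearMap.comp_apply] at h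
  rw [h, epsL_cons]

include hπQ in
lemma pQ_sg' (w : List V) : πQ ((rel k V).mkQ (sg w)) = (rel k V).mkQ (piW k V w) := by
  have h := LinearMap.congr_fun hπQ (sg w)
  simp only [LinearMap.comp_apply] at h
  rw [h, piL_sg]

include hι hpQ in
lemma consQ (a : V) (v : List V) :
    pQ (ι a) ((rel k V).mkQ (sg v)) = (rel k V).mkQ (sg (a :: v)) := by
  rw [hι, hpQ]
  congr 1
  rw [precL, ext2_sg, precW_single]

end Aux5
section Aux6
set_option linter.unusedSectionVars false

variable {k V} [NonUnitalCommRing V] [Module k V]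
variable (ΔQ : QT k V →ₗ[k] QT k V ⊗[k] QT k V)
    (εQ : QT k V →ₗ[k] k)
    (πQ : QT k V →ₗ[k] QT k V)
    (ι : V →ₗ[k] QT k V)
    (pQ : QT k V →ₗ[k] QT k V →ₗ[k] QT k V)
    (hΔQ : ΔQ ∘ₗ (rel k V).mkQ
      = TensorProduct.map (rel k V).mkQ (rel k V).mkQ ∘ₗ delL k V)
    (hεQ : εQ ∘ₗ (rel k V).mkQ = epsL k V)
    (hπQ : πQ ∘ₗ (rel k V).mkQ = (rel k V).mkQ ∘ₗ piL k V)
    (hι : ∀ v : V, ι v = (rel k V).mkQ (sg [v]))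
    (hpQ : ∀ x y : TW k V,
      pQ ((rel k V).mkQ x) ((rel k V).mkQ y) = (rel k V).mkQ (precL k V (· * ·) x y))
    (f : QT k V →ₗ[k] V)
    (hf : f ((rel k V).mkQ (sg ([] : List V))) = 0)

include hΔQ hι hpQ in
lemma DQ_consop (a : V) (x : QT k V) :
    ΔQ (pQ (ι a) x) = (rel k V).mkQ (sg []) ⊗ₜ[k] (pQ (ι a) x)
      + TensorProduct.map (pQ (ι a)) LinearMap.id (ΔQ x) := by
  have key : ΔQ ∘ₗ pQ (ι a)
      = (TensorProduct.mk k (QT k V) (QT k V) ((rel k V).mkQ (sg []))) ∘ₗ pQ (ι a)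
        + TensorProduct.map (pQ (ι a)) LinearMap.id ∘ₗ ΔQ := by
    refine QT_ext fun w => ?_
    simp only [LinearMap.comp_apply, LinearMap.add_apply, TensorProduct.mk_apply]
    rw [consQ ι pQ hι hpQ, DQ_sg ΔQ hΔQ, DQ_sg ΔQ hΔQ, map_sum]
    simp only [List.length_cons, TensorProduct.map_tmul, LinearMap.id_apply,
      consQ ι pQ hι hpQ]
    rw [Finset.sum_range_succ' _ (w.length + 1)]
    simp only [List.take_succ_cons, List.drop_succ_cons, List.take_zero, List.drop_zero]
    rw [add_comm]
  exact LinearMap.congr_fun key x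

include hεQ hι hpQ in
lemma eQ_consop (a : V) (x : QT k V) : εQ (pQ (ι a) x) = 0 := by
  have key : εQ ∘ₗ pQ (ι a) = 0 := by
    refine QT_ext fun w => ?_
    simp only [LinearMap.comp_apply, LinearMap.zero_apply]
    rw [consQ ι pQ hι hpQ, eQ_sg_cons εQ hεQ]
  exact LinearMap.congr_fun key x

include hεQ hπQ hι hpQ in
lemma piQ_consop (a : V) (x : QT k V) : πQ (pQ (ι a) x) = εQ x • ι a := by
  have key : πQ ∘ₗ pQ (ι a) = LinearMap.toSpanSingleton k (QT k V) (ι a) ∘ₗ εQ := by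
    refine QT_ext fun w => ?_
    simp only [LinearMap.comp_apply, LinearMap.toSpanSingleton_apply]
    rw [consQ ι pQ hι hpQ, pQ_sg' πQ hπQ]
    cases w with
    | nil =>
      rw [eQ_sg_nil εQ hεQ, one_smul, hι]
      simp [piW]
    | cons b v =>
      rw [eQ_sg_cons εQ hεQ, zero_smul]
      simp [piW]
  exact LinearMap.congr_fun key x

include hΔQ hεQ hπQ hι hpQ in
lemma idQ_eq (x : QT k V) :
    x = εQ x • (rel k V).mkQ (sg [])
      + TensorProduct.lift pQ (TensorProduct.map πQ LinearMap.id (ΔQ x)) := by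
  have key : (LinearMap.id : QT k V →ₗ[k] QT k V)
      = LinearMap.toSpanSingleton k (QT k V) ((rel k V).mkQ (sg [])) ∘ₗ εQ
        + TensorProduct.lift pQ ∘ₗ TensorProduct.map πQ LinearMap.id ∘ₗ ΔQ := by
    refine QT_ext fun w => ?_
    simp only [LinearMap.comp_apply, LinearMap.add_apply, LinearMap.id_apply,
      LinearMap.toSpanSingleton_apply]
    rw [DQ_sg ΔQ hΔQ, map_sum, map_sum]
    simp only [TensorProduct.map_tmul, LinearMap.id_apply, TensorProduct.lift.tmul,
      pQ_sg' πQ hπQ]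
    cases w with
    | nil =>
      rw [eQ_sg_nil εQ hεQ, one_smul]
      simp [piW, hpQ]
    | cons a v =>
      rw [eQ_sg_cons εQ hεQ, zero_smul, zero_add]
      rw [Finset.sum_eq_single 1]
      · simp only [List.take_succ_cons, List.take_zero, List.drop_succ_cons, List.drop_zero]
        rw [show piW k V [a] = sg [a] by simp [piW], hpQ]
        rw [show precL k V (· * ·) (sg [a]) (sg v) = precW k V (· * ·) [a] v from ext2_sg _ _ _,
          precW_single]
      · intro i hi hne
        have h0 : piW k V ((a :: v).take i) = 0 := by
          simp only [piW, List.length_take, List.length_cons]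
          have : ¬ (min i (v.length + 1) = 1) := by
            simp only [Finset.mem_range, List.length_cons] at hi
            omega
          simp [this]
        rw [h0]
        simp
      · intro h
        simp at h
  have hx := LinearMap.congr_fun key x
  simp only [LinearMap.id_apply, LinearMap.add_apply, LinearMap.comp_apply,
    LinearMap.toSpanSingleton_apply] at hx
  exact hx

end Aux6
section Aux7
set_option linter.unusedSectionVars false

variable {k V} [NonUnitalCommRing V] [Module k V]
variable (ΔQ : QT k V →ₗ[k] QT k V ⊗[k] QT k V)
    (εQ : QT k V →ₗ[k] k)
    (πQ : QT k V →ₗ[k] QT k V)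
    (ι : V →ₗ[k] QT k V)
    (pQ : QT k V →ₗ[k] QT k V →ₗ[k] QT k V)
    (hΔQ : ΔQ ∘ₗ (rel k V).mkQ
      = TensorProduct.map (rel k V).mkQ (rel k V).mkQ ∘ₗ delL k V)
    (hεQ : εQ ∘ₗ (rel k V).mkQ = epsL k V)
    (hπQ : πQ ∘ₗ (rel k V).mkQ = (rel k V).mkQ ∘ₗ piL k V)
    (hι : ∀ v : V, ι v = (rel k V).mkQ (sg [v]))
    (hpQ : ∀ x y : TW k V,
      pQ ((rel k V).mkQ x) ((rel k V).mkQ y) = (rel k V).mkQ (precL k V (· * ·) x y))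
    (f : QT k V →ₗ[k] V)
    (hf : f ((rel k V).mkQ (sg ([] : List V))) = 0)


include hf in
lemma hf_mk : f (Submodule.Quotient.mk (sg ([] : List V)) : QT k V) = 0 := hf

include hΔQ hεQ in
lemma sol_basis (ψ' : QT k V →ₗ[k] QT k V)
    (h : ψ' = LinearMap.toSpanSingleton k (QT k V) ((rel k V).mkQ (sg [])) ∘ₗ εQ
        + TensorProduct.lift pQ ∘ₗ TensorProduct.map (ι ∘ₗ f) ψ' ∘ₗ ΔQ)
    (w : List V) :
    ψ' ((rel k V).mkQ (sg w)) = εQ ((rel k V).mkQ (sg w)) • (rel k V).mkQ (sg [])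
      + ∑ i ∈ Finset.range (w.length + 1),
          pQ (ι (f ((rel k V).mkQ (sg (w.take i))))) (ψ' ((rel k V).mkQ (sg (w.drop i)))) := by
  have hx := LinearMap.congr_fun h ((rel k V).mkQ (sg w))
  rw [hx]
  simp only [LinearMap.add_apply, LinearMap.comp_apply, LinearMap.toSpanSingleton_apply]
  congr 1
  rw [DQ_sg ΔQ hΔQ, map_sum, map_sum]
  simp only [TensorProduct.map_tmul, TensorProduct.lift.tmul, LinearMap.comp_apply]

include hΔQ hεQ hf in
lemma sol_unique (ψ1 ψ2 : QT k V →ₗ[k] QT k V)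
    (h1 : ψ1 = LinearMap.toSpanSingleton k (QT k V) ((rel k V).mkQ (sg [])) ∘ₗ εQ
        + TensorProduct.lift pQ ∘ₗ TensorProduct.map (ι ∘ₗ f) ψ1 ∘ₗ ΔQ)
    (h2 : ψ2 = LinearMap.toSpanSingleton k (QT k V) ((rel k V).mkQ (sg [])) ∘ₗ εQ
        + TensorProduct.lift pQ ∘ₗ TensorProduct.map (ι ∘ₗ f) ψ2 ∘ₗ ΔQ) :
    ψ1 = ψ2 := by
  suffices H : ∀ (n : ℕ) (w : List V), w.length ≤ n →
      ψ1 ((rel k V).mkQ (sg w)) = ψ2 ((rel k V).mkQ (sg w)) by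
    exact QT_ext fun w => H w.length w le_rfl
  intro n
  induction n with
  | zero =>
    intro w hw
    rw [List.length_eq_zero_iff.1 (Nat.le_zero.1 hw)]
    rw [sol_basis ΔQ εQ ι pQ hΔQ hεQ f ψ1 h1, sol_basis ΔQ εQ ι pQ hΔQ hεQ f ψ2 h2]
    simp [hf, hf_mk f hf]
  | succ n ih =>
    intro w hw
    cases w with
    | nil =>
      rw [sol_basis ΔQ εQ ι pQ hΔQ hεQ f ψ1 h1, sol_basis ΔQ εQ ι pQ hΔQ hεQ f ψ2 h2]
      simp [hf, hf_mk f hf]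
    | cons a v =>
      rw [sol_basis ΔQ εQ ι pQ hΔQ hεQ f ψ1 h1, sol_basis ΔQ εQ ι pQ hΔQ hεQ f ψ2 h2]
      congr 1
      simp only [List.length_cons]
      rw [Finset.sum_range_succ' _ (v.length + 1), Finset.sum_range_succ' _ (v.length + 1)]
      simp only [List.take_zero, hf, map_zero, LinearMap.zero_apply, List.length_cons]
      congr 1
      refine Finset.sum_congr rfl fun i _ => ?_
      simp only [List.take_succ_cons, List.drop_succ_cons]
      rw [ih (v.drop i) (by simp only [List.length_drop]; simp at hw; omega)]

include hΔQ hεQ hι hpQ hf in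
lemma psiQ_fixed :
    psiQ ι pQ f = LinearMap.toSpanSingleton k (QT k V) ((rel k V).mkQ (sg [])) ∘ₗ εQ
        + TensorProduct.lift pQ ∘ₗ TensorProduct.map (ι ∘ₗ f) (psiQ ι pQ f) ∘ₗ ΔQ := by
  refine QT_ext fun w => ?_
  simp only [LinearMap.add_apply, LinearMap.comp_apply, LinearMap.toSpanSingleton_apply]
  rw [DQ_sg ΔQ hΔQ, map_sum, map_sum]
  simp only [TensorProduct.map_tmul, TensorProduct.lift.tmul, LinearMap.comp_apply]
  cases w with
  | nil =>
    rw [psiQ_nil, eQ_sg_nil εQ hεQ, one_smul]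
    simp [hf, hf_mk f hf]
  | cons a v =>
    rw [psiQ_cons, eQ_sg_cons εQ hεQ, zero_smul, zero_add, List.length_cons,
      Finset.sum_range_succ' _ (v.length + 1)]
    simp only [List.take_succ_cons, List.drop_succ_cons, List.take_zero, hf, map_zero,
      LinearMap.zero_apply, add_zero]

end Aux7
section Aux8
set_option linter.unusedSectionVars false

variable {k V} [NonUnitalCommRing V] [Module k V]
variable (ΔQ : QT k V →ₗ[k] QT k V ⊗[k] QT k V)
    (εQ : QT k V →ₗ[k] k)
    (πQ : QT k V →ₗ[k] QT k V)
    (ι : V →ₗ[k] QT k V)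
    (pQ : QT k V →ₗ[k] QT k V →ₗ[k] QT k V)
    (hΔQ : ΔQ ∘ₗ (rel k V).mkQ
      = TensorProduct.map (rel k V).mkQ (rel k V).mkQ ∘ₗ delL k V)
    (hεQ : εQ ∘ₗ (rel k V).mkQ = epsL k V)
    (hπQ : πQ ∘ₗ (rel k V).mkQ = (rel k V).mkQ ∘ₗ piL k V)
    (hι : ∀ v : V, ι v = (rel k V).mkQ (sg [v]))
    (hpQ : ∀ x y : TW k V,
      pQ ((rel k V).mkQ x) ((rel k V).mkQ y) = (rel k V).mkQ (precL k V (· * ·) x y))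
    (f : QT k V →ₗ[k] V)
    (hf : f ((rel k V).mkQ (sg ([] : List V))) = 0)


include hεQ hι hpQ in
lemma eps_comp : εQ ∘ₗ psiQ ι pQ f = εQ := by
  refine QT_ext fun w => ?_
  simp only [LinearMap.comp_apply]
  cases w with
  | nil => rw [psiQ_nil]
  | cons a v =>
    rw [psiQ_cons, map_sum, eQ_sg_cons εQ hεQ]
    exact Finset.sum_eq_zero fun i _ => eQ_consop εQ ι pQ hεQ hι hpQ _ _

include hΔQ hι hpQ in
lemma delta_comp : ΔQ ∘ₗ psiQ ι pQ f
    = TensorProduct.map (psiQ ι pQ f) (psiQ ι pQ f) ∘ₗ ΔQ := by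
  suffices H : ∀ (n : ℕ) (w : List V), w.length ≤ n →
      ΔQ (psiQ ι pQ f ((rel k V).mkQ (sg w)))
      = TensorProduct.map (psiQ ι pQ f) (psiQ ι pQ f) (ΔQ ((rel k V).mkQ (sg w))) by
    exact QT_ext fun w => H w.length w le_rfl
  have nilcase : ΔQ (psiQ ι pQ f ((rel k V).mkQ (sg ([] : List V))))
      = TensorProduct.map (psiQ ι pQ f) (psiQ ι pQ f) (ΔQ ((rel k V).mkQ (sg ([] : List V)))) := by
    rw [psiQ_nil, DQ_sg ΔQ hΔQ, map_sum]
    refine Finset.sum_congr rfl fun i _ => ?_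
    rw [TensorProduct.map_tmul, List.take_nil, List.drop_nil, psiQ_nil]
  intro n
  induction n with
  | zero =>
    intro w hw
    rw [List.length_eq_zero_iff.1 (Nat.le_zero.1 hw)]
    exact nilcase
  | succ n ih =>
    intro w hw
    cases w with
    | nil => exact nilcase
    | cons a v =>
      simp only [List.length_cons] at hw
      set ψ := psiQ ι pQ f with hψ
      set T : ℕ → ℕ → QT k V ⊗[k] QT k V := fun i j =>
        pQ (ι (f ((rel k V).mkQ (sg (a :: v.take i)))))
            (ψ ((rel k V).mkQ (sg ((v.drop i).take j))))
          ⊗ₜ[k] ψ ((rel k V).mkQ (sg ((v.drop i).drop j))) with hT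
      -- LHS
      rw [psiQ_cons, map_sum]
      simp only [DQ_consop ΔQ ι pQ hΔQ hι hpQ]
      rw [Finset.sum_add_distrib, ← TensorProduct.tmul_sum, ← hψ, ← psiQ_cons]
      have lhs2 : ∀ i ∈ Finset.range (v.length + 1),
          TensorProduct.map (pQ (ι (f ((rel k V).mkQ (sg (a :: v.take i)))))) LinearMap.id
              (ΔQ (ψ ((rel k V).mkQ (sg (v.drop i)))))
          = ∑ j ∈ Finset.range (v.length - i + 1), T i j := by
        intro i hi
        rw [hψ, ih (v.drop i) (by simp only [List.length_drop]; omega)]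
        rw [DQ_sg ΔQ hΔQ, map_sum, map_sum, List.length_drop]
        simp only [TensorProduct.map_tmul, LinearMap.id_apply, hT]
      rw [Finset.sum_congr rfl lhs2, triangle_sum]
      -- RHS
      rw [DQ_sg ΔQ hΔQ, map_sum, List.length_cons,
        Finset.sum_range_succ' _ (v.length + 1)]
      simp only [TensorProduct.map_tmul, List.take_succ_cons, List.drop_succ_cons,
        List.take_zero, List.drop_zero, ← hψ]
      rw [psiQ_nil ι pQ f, add_comm]
      congr 1
      refine Finset.sum_congr rfl fun m hm => ?_
      simp only [Finset.mem_range] at hm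
      rw [hψ, psiQ_cons, TensorProduct.sum_tmul]
      have hlen : (v.take m).length = m := by
        simp only [List.length_take]; omega
      rw [hlen]
      refine Finset.sum_congr rfl fun i hi => ?_
      simp only [Finset.mem_range] at hi
      have h1 : (v.take m).take i = v.take i := by
        rw [List.take_take]; congr 1; omega
      have h2 : (v.take m).drop i = (v.drop i).take (m - i) := List.drop_take
      have h3 : v.drop m = (v.drop i).drop (m - i) := by
        rw [List.drop_drop]; congr 1; omega
      rw [h1, h2, h3, hT]

include hΔQ hεQ hπQ hι hpQ hf in
lemma pi_comp : πQ ∘ₗ psiQ ι pQ f = ι ∘ₗ f := by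
  refine QT_ext fun w => ?_
  simp only [LinearMap.comp_apply]
  cases w with
  | nil =>
    rw [psiQ_nil, pQ_sg' πQ hπQ]
    rw [show piW k V ([] : List V) = 0 by simp [piW], hf]
    simp
  | cons a v =>
    rw [psiQ_cons, map_sum]
    simp only [piQ_consop εQ πQ ι pQ hεQ hπQ hι hpQ]
    simp only [show ∀ x, εQ ((psiQ ι pQ f) x) = εQ x from
      LinearMap.congr_fun (eps_comp εQ ι pQ hεQ hι hpQ f)]
    rw [Finset.sum_eq_single v.length]
    · rw [List.drop_length, eQ_sg_nil εQ hεQ, one_smul, List.take_length]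
    · intro i hi hne
      simp only [Finset.mem_range] at hi
      have hdrop : v.drop i ≠ [] := by
        rw [ne_eq, List.drop_eq_nil_iff]; omega
      obtain ⟨b, t, hbt⟩ := List.exists_cons_of_ne_nil hdrop
      rw [hbt, eQ_sg_cons εQ hεQ, zero_smul]
    · intro h
      simp at h

include hΔQ hεQ hπQ hι hpQ in
lemma coalg_fixed (ψ' : QT k V →ₗ[k] QT k V)
    (hΔ : ΔQ ∘ₗ ψ' = TensorProduct.map ψ' ψ' ∘ₗ ΔQ)
    (hε : εQ ∘ₗ ψ' = εQ)
    (hπ : πQ ∘ₗ ψ' = ι ∘ₗ f) :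
    ψ' = LinearMap.toSpanSingleton k (QT k V) ((rel k V).mkQ (sg [])) ∘ₗ εQ
        + TensorProduct.lift pQ ∘ₗ TensorProduct.map (ι ∘ₗ f) ψ' ∘ₗ ΔQ := by
  have hmap : TensorProduct.map πQ LinearMap.id ∘ₗ TensorProduct.map ψ' ψ'
      = TensorProduct.map (ι ∘ₗ f) ψ' := by
    rw [← TensorProduct.map_comp, hπ, LinearMap.id_comp]
  refine LinearMap.ext fun x => ?_
  have h0 := idQ_eq ΔQ εQ πQ ι pQ hΔQ hεQ hπQ hι hpQ (ψ' x)
  have hεx : εQ (ψ' x) = εQ x := LinearMap.congr_fun hε x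
  rw [hεx] at h0
  rw [show ΔQ (ψ' x) = TensorProduct.map ψ' ψ' (ΔQ x) from LinearMap.congr_fun hΔ x] at h0
  rw [show TensorProduct.map πQ LinearMap.id (TensorProduct.map ψ' ψ' (ΔQ x))
      = TensorProduct.map (ι ∘ₗ f) ψ' (ΔQ x) from LinearMap.congr_fun hmap (ΔQ x)] at h0
  rw [h0]
  simp only [LinearMap.add_apply, LinearMap.comp_apply, LinearMap.toSpanSingleton_apply]

end Aux8
/-- Let `f : T(V) → V` be linear with `f(1) = 0`. There is a unique (counital)
coalgebra endomorphism `ψ` of `(T(V), Δ)` with `π ∘ ψ = f`; moreover `ψ` is the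
unique linear endomorphism satisfying `ψ = ε + f ≺ ψ`.
Here `T(V)` is the quotient `QT` of the word model by the multilinearity
relations; `ΔQ, εQ, πQ, ι, pQ` are the deconcatenation coproduct, augmentation,
projection onto `V`, inclusion of `V`, and Hoffman's `≺`, descended to `QT`. -/
theorem coalgebra_endomorphism_unique
    (ΔQ : QT k V →ₗ[k] QT k V ⊗[k] QT k V)
    (εQ : QT k V →ₗ[k] k)
    (πQ : QT k V →ₗ[k] QT k V)
    (ι : V →ₗ[k] QT k V)
    (pQ : QT k V →ₗ[k] QT k V →ₗ[k] QT k V)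
    (hΔQ : ΔQ ∘ₗ (rel k V).mkQ
      = TensorProduct.map (rel k V).mkQ (rel k V).mkQ ∘ₗ delL k V)
    (hεQ : εQ ∘ₗ (rel k V).mkQ = epsL k V)
    (hπQ : πQ ∘ₗ (rel k V).mkQ = (rel k V).mkQ ∘ₗ piL k V)
    (hι : ∀ v : V, ι v = (rel k V).mkQ (sg [v]))
    (hpQ : ∀ x y : TW k V,
      pQ ((rel k V).mkQ x) ((rel k V).mkQ y) = (rel k V).mkQ (precL k V (· * ·) x y))
    (f : QT k V →ₗ[k] V)
    (hf : f ((rel k V).mkQ (sg ([] : List V))) = 0) :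
    ∃ ψ : QT k V →ₗ[k] QT k V,
      -- ψ is a counital coalgebra endomorphism with π ∘ ψ = f
      ((ΔQ ∘ₗ ψ = TensorProduct.map ψ ψ ∘ₗ ΔQ) ∧ (εQ ∘ₗ ψ = εQ) ∧ (πQ ∘ₗ ψ = ι ∘ₗ f)) ∧
      -- ψ satisfies ψ = ε + f ≺ ψ
      (ψ = LinearMap.toSpanSingleton k (QT k V) ((rel k V).mkQ (sg [])) ∘ₗ εQ
          + TensorProduct.lift pQ ∘ₗ TensorProduct.map (ι ∘ₗ f) ψ ∘ₗ ΔQ) ∧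
      -- uniqueness for both characterizations
      (∀ ψ' : QT k V →ₗ[k] QT k V,
        ((ΔQ ∘ₗ ψ' = TensorProduct.map ψ' ψ' ∘ₗ ΔQ) ∧ (εQ ∘ₗ ψ' = εQ) ∧
          (πQ ∘ₗ ψ' = ι ∘ₗ f)) → ψ' = ψ) ∧
      (∀ ψ' : QT k V →ₗ[k] QT k V,
        (ψ' = LinearMap.toSpanSingleton k (QT k V) ((rel k V).mkQ (sg [])) ∘ₗ εQ
            + TensorProduct.lift pQ ∘ₗ TensorProduct.map (ι ∘ₗ f) ψ' ∘ₗ ΔQ) → ψ' = ψ) := by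
  refine ⟨psiQ ι pQ f,
    ⟨delta_comp ΔQ ι pQ hΔQ hι hpQ f,
     eps_comp εQ ι pQ hεQ hι hpQ f,
     pi_comp ΔQ εQ πQ ι pQ hΔQ hεQ hπQ hι hpQ f hf⟩,
    psiQ_fixed ΔQ εQ ι pQ hΔQ hεQ hι hpQ f hf, ?_, ?_⟩
  · rintro ψ' ⟨h1, h2, h3⟩
    exact sol_unique ΔQ εQ ι pQ hΔQ hεQ f hf ψ' (psiQ ι pQ f)
      (coalg_fixed ΔQ εQ πQ ι pQ hΔQ hεQ hπQ hι hpQ f ψ' h1 h2 h3)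
      (psiQ_fixed ΔQ εQ ι pQ hΔQ hεQ hι hpQ f hf)
  · intro ψ' h
    exact sol_unique ΔQ εQ ι pQ hΔQ hεQ f hf ψ' (psiQ ι pQ f) h
      (psiQ_fixed ΔQ εQ ι pQ hΔQ hεQ hι hpQ f hf)
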